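/- arXiv:1707.05659 — 3 statements merged into one kernel-verified Lean document; each statement's English description precedes it below -/
import Mathlib

section
/- Let u : ℝ × ℝ → ℂ be twice continuously differentiable. Then u satisfies the focusing NLS equation i u_t + u_xx + 2|u|² u = 0 at every point (x,t) if and only if the zero-curvature equation ∂_t U(λ,x,t) − ∂_x V(λ,x,t) + U(λ,x,t)·V(λ,x,t) − V(λ,x,t)·U(λ,x,t) = 0 holds for every λ ∈ ℂ and every (x,t) ∈ ℝ × ℝ. -/
open Complex

/-- Partial derivative in `x` of a function `u : ℝ × ℝ → ℂ`. -/
noncomputable def pdx (u : ℝ × ℝ → ℂ) (x t : ℝ) : ℂ := deriv (fun s : ℝ => u (s, t)) x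

/-- Second partial derivative in `x`. -/
noncomputable def pdxx (u : ℝ × ℝ → ℂ) (x t : ℝ) : ℂ := deriv (fun s : ℝ => pdx u s t) x

/-- Partial derivative in `t`. -/
noncomputable def pdt (u : ℝ × ℝ → ℂ) (x t : ℝ) : ℂ := deriv (fun s : ℝ => u (x, s)) t

/-- The matrix `U(λ,x,t)` of the Zakharov–Shabat zero-curvature representation. -/
noncomputable def ZSU (u : ℝ × ℝ → ℂ) (lam : ℂ) (x t : ℝ) : Matrix (Fin 2) (Fin 2) ℂ :=
  !![-Complex.I * lam, Complex.I * u (x, t);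
     Complex.I * (starRingEnd ℂ) (u (x, t)), Complex.I * lam]

/-- The matrix `V(λ,x,t)` of the Zakharov–Shabat zero-curvature representation. -/
noncomputable def ZSV (u : ℝ × ℝ → ℂ) (lam : ℂ) (x t : ℝ) : Matrix (Fin 2) (Fin 2) ℂ :=
  !![-2 * Complex.I * lam ^ 2 + Complex.I * ((‖u (x, t)‖ : ℂ)) ^ 2,
       2 * Complex.I * lam * u (x, t) - pdx u x t;
     2 * Complex.I * lam * (starRingEnd ℂ) (u (x, t)) + (starRingEnd ℂ) (pdx u x t),
       2 * Complex.I * lam ^ 2 - Complex.I * ((‖u (x, t)‖ : ℂ)) ^ 2]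

/-! For every `λ` the matrix `∂ₜU − ∂ₓV + [U, V]` equals `!![0, N; -conj N, 0]` with
`N = i u_t + u_xx + 2|u|² u`: the `λ`-dependent terms of `∂ₓV` cancel against those of `[U, V]`,
and on the diagonal `∂ₓ|u|² = u_x ū + u ū_x` cancels the commutator. So the zero-curvature
equation holds for one (equivalently, every) `λ` exactly where `N` vanishes. -/

open ComplexConjugate

noncomputable def nlsResidual (u : ℝ × ℝ → ℂ) (x t : ℝ) : ℂ :=
  I * pdt u x t + pdxx u x t + 2 * (‖u (x, t)‖ : ℂ) ^ 2 * u (x, t)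

noncomputable def zeroCurvature (u : ℝ × ℝ → ℂ) (lam : ℂ) (x t : ℝ) :
    Matrix (Fin 2) (Fin 2) ℂ :=
  Matrix.of fun i j =>
    deriv (fun s => ZSU u lam x s i j) t - deriv (fun s => ZSV u lam s t i j) x
      + (ZSU u lam x t * ZSV u lam x t - ZSV u lam x t * ZSU u lam x t) i j

theorem ContDiff.differentiable_pdx {u : ℝ × ℝ → ℂ} (hu : ContDiff ℝ 2 u) (t : ℝ) :
    Differentiable ℝ fun s => pdx u s t := by
  have hu1 : Differentiable ℝ u := hu.differentiable two_ne_zero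
  have hpdx : (fun s => pdx u s t) = fun s => fderiv ℝ u (s, t) (1, 0) := by
    funext s
    exact ((hu1 (s, t)).hasFDerivAt.comp_hasDerivAt s
      ((hasDerivAt_id s).prodMk (hasDerivAt_const s t))).deriv
  have hG : ContDiff ℝ 1 fun p => fderiv ℝ u p (1, 0) :=
    (hu.fderiv_right (m := 1) one_add_one_eq_two.le).clm_apply contDiff_const
  rw [hpdx]
  exact (hG.differentiable one_ne_zero).comp (differentiable_id.prodMk (differentiable_const t))

section ZakharovShabat

variable {u : ℝ × ℝ → ℂ} {lam : ℂ} {x t : ℝ}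

lemma hasDerivAt_ZSU_apply {ut : ℂ} (ht : HasDerivAt (fun s => u (x, s)) ut t) (i j : Fin 2) :
    HasDerivAt (fun s => ZSU u lam x s i j) (!![0, I * ut; I * conj ut, 0] i j) t := by
  have hct : HasDerivAt (fun s => conj (u (x, s))) (conj ut) t := ht.star
  fin_cases i <;> fin_cases j <;>
    simp only [ZSU, Fin.zero_eta, Fin.mk_one, Fin.isValue, Matrix.of_apply, Matrix.cons_val',
      Matrix.cons_val_zero, Matrix.cons_val_one, Matrix.cons_val_fin_one]
  · exact hasDerivAt_const _ _
  · exact ht.const_mul I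
  · exact hct.const_mul I
  · exact hasDerivAt_const _ _

lemma hasDerivAt_ZSV_apply {ux uxx : ℂ} (hx : HasDerivAt (fun s => u (s, t)) ux x)
    (hxx : HasDerivAt (fun s => pdx u s t) uxx x) (i j : Fin 2) :
    HasDerivAt (fun s => ZSV u lam s t i j)
      (!![I * (ux * conj (u (x, t)) + u (x, t) * conj ux), 2 * I * lam * ux - uxx;
          2 * I * lam * conj ux + conj uxx,
          -(I * (ux * conj (u (x, t)) + u (x, t) * conj ux))] i j) x := by
  have hcx : HasDerivAt (fun s => conj (u (s, t))) (conj ux) x := hx.star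
  have hcxx : HasDerivAt (fun s => conj (pdx u s t)) (conj uxx) x := hxx.star
  have hsq : HasDerivAt (fun s => (‖u (s, t)‖ : ℂ) ^ 2)
      (ux * conj (u (x, t)) + u (x, t) * conj ux) x := by
    simp_rw [← mul_conj']
    exact hx.mul hcx
  fin_cases i <;> fin_cases j <;>
    simp only [ZSV, Fin.zero_eta, Fin.mk_one, Fin.isValue, Matrix.of_apply, Matrix.cons_val',
      Matrix.cons_val_zero, Matrix.cons_val_one, Matrix.cons_val_fin_one]
  · exact (hsq.const_mul I).const_add _
  · exact (hx.const_mul _).sub hxx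
  · exact (hcx.const_mul _).add hcxx
  · exact (hsq.const_mul I).const_sub _

lemma ZSU_mul_ZSV_sub_ZSV_mul_ZSU :
    ZSU u lam x t * ZSV u lam x t - ZSV u lam x t * ZSU u lam x t =
      !![I * (u (x, t) * conj (pdx u x t) + conj (u (x, t)) * pdx u x t),
          2 * I * lam * pdx u x t + 2 * (‖u (x, t)‖ : ℂ) ^ 2 * u (x, t);
          2 * I * lam * conj (pdx u x t) - 2 * (‖u (x, t)‖ : ℂ) ^ 2 * conj (u (x, t)),
          -(I * (u (x, t) * conj (pdx u x t) + conj (u (x, t)) * pdx u x t))] := by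
  ext i j
  fin_cases i <;> fin_cases j <;>
    simp only [ZSU, ZSV, Matrix.mul_fin_two, Matrix.sub_apply, Fin.zero_eta, Fin.mk_one,
      Fin.isValue, Matrix.of_apply, Matrix.cons_val', Matrix.cons_val_zero, Matrix.cons_val_one,
      Matrix.cons_val_fin_one]
  · ring
  · linear_combination (-2 * (‖u (x, t)‖ : ℂ) ^ 2 * u (x, t)) * I_sq
  · linear_combination (2 * (‖u (x, t)‖ : ℂ) ^ 2 * conj (u (x, t))) * I_sq
  · ring

lemma zeroCurvature_eq (hx : DifferentiableAt ℝ (fun s => u (s, t)) x)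
    (ht : DifferentiableAt ℝ (fun s => u (x, s)) t)
    (hxx : DifferentiableAt ℝ (fun s => pdx u s t) x) :
    zeroCurvature u lam x t = !![0, nlsResidual u x t; -conj (nlsResidual u x t), 0] := by
  have hux : HasDerivAt (fun s => u (s, t)) (pdx u x t) x := hx.hasDerivAt
  have hut : HasDerivAt (fun s => u (x, s)) (pdt u x t) t := ht.hasDerivAt
  have huxx : HasDerivAt (fun s => pdx u s t) (pdxx u x t) x := hxx.hasDerivAt
  ext i j
  rw [zeroCurvature, Matrix.of_apply, (hasDerivAt_ZSU_apply hut i j).deriv,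
    (hasDerivAt_ZSV_apply hux huxx i j).deriv, ZSU_mul_ZSV_sub_ZSV_mul_ZSU]
  fin_cases i <;> fin_cases j <;>
    simp only [nlsResidual, Fin.zero_eta, Fin.mk_one,
      Fin.isValue, Matrix.of_apply, Matrix.cons_val', Matrix.cons_val_zero, Matrix.cons_val_one,
      Matrix.cons_val_fin_one]
  · ring
  · ring
  · simp only [map_add, map_mul, map_pow, map_ofNat, conj_I, conj_ofReal]
    ring
  · ring

lemma zeroCurvature_eq_zero_iff (hx : DifferentiableAt ℝ (fun s => u (s, t)) x)
    (ht : DifferentiableAt ℝ (fun s => u (x, s)) t)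
    (hxx : DifferentiableAt ℝ (fun s => pdx u s t) x) :
    zeroCurvature u lam x t = 0 ↔ nlsResidual u x t = 0 := by
  simp [zeroCurvature_eq hx ht hxx, ← Matrix.ext_iff, Fin.forall_fin_two]

end ZakharovShabat

/-- A twice continuously differentiable `u : ℝ × ℝ → ℂ` satisfies the focusing
NLS equation `i u_t + u_xx + 2|u|² u = 0` at every point if and only if the zero-curvature
equation `∂_t U − ∂_x V + U·V − V·U = 0` holds for every `λ ∈ ℂ` and every `(x,t)`. -/
theorem nls_iff_zero_curvature (u : ℝ × ℝ → ℂ) (hu : ContDiff ℝ 2 u) :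
    (∀ x t : ℝ,
        Complex.I * pdt u x t + pdxx u x t
          + 2 * ((‖u (x, t)‖ : ℂ)) ^ 2 * u (x, t) = 0)
      ↔
    (∀ (lam : ℂ) (x t : ℝ) (i j : Fin 2),
        deriv (fun s : ℝ => ZSU u lam x s i j) t - deriv (fun s : ℝ => ZSV u lam s t i j) x
          + (ZSU u lam x t * ZSV u lam x t - ZSV u lam x t * ZSU u lam x t) i j = 0) := by
  have hu1 : Differentiable ℝ u := hu.differentiable two_ne_zero
  have key (lam : ℂ) (x t : ℝ) : zeroCurvature u lam x t = 0 ↔ nlsResidual u x t = 0 :=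
    zeroCurvature_eq_zero_iff (hu1.comp (differentiable_id.prodMk (differentiable_const t)) x)
      (hu1.comp ((differentiable_const x).prodMk differentiable_id) t) (hu.differentiable_pdx t x)
  exact ⟨fun h lam x t i j => congrFun₂ ((key lam x t).mpr (h x t)) i j,
    fun h x t => (key 0 x t).mp (Matrix.ext (h 0 x t))⟩
end

section
/- Let m ≥ 1, let L₀ be a diagonal m×m complex matrix one of whose diagonal entries equals λ₁ with multiplicity k, occurring exactly at the index set S = {j₁, …, j_k}, and let L₁ be any m×m complex matrix. Let A₁ be the k×k submatrix of L₁ obtained by keeping only the rows and columns indexed by S, and assume the eigenvalues λ̃₁, …, λ̃_k of A₁ (the roots of its characteristic polynomial) are pairwise distinct. Then there exist constants C > 0 and ε₀ > 0 such that for every ε with 0 < |ε| < ε₀ and every j ∈ {1, …, k}, the matrix L₀ + ε L₁ has a simple eigenvalue ν_j(ε) (a simple root of its characteristic polynomial) with |ν_j(ε) − λ₁ − ε λ̃_j| ≤ C|ε|². -/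
/-!
Put `ν = λ₁ + ε μ` and divide the rows of `ν - (L₀ + ε L₁)` indexed by `S` (where `λ₁ - L₀`
vanishes) by `ε`. This gives `χ_{L₀ + ε L₁}(λ₁ + ε μ) = εᵏ F(ε, μ)` with `F` polynomial in `(ε, μ)`
and `F(0, μ) = c χ_{A₁}(μ)`, where `c = ∏_{i ∉ S} (λ₁ - L₀ i i) ≠ 0`. Each `λ̃_j` is a simple zero
of `F(0, ·)`, so by the implicit function theorem `F(ε, ·)` has a zero `μ_j(ε) = λ̃_j + O(ε)` at
which its `μ`-derivative does not vanish, and `λ₁ + ε μ_j(ε)` is a simple root of `χ_{L₀ + ε L₁}`.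
-/

open Matrix Polynomial Filter Topology

namespace Polynomial

theorem rootMultiplicity_eq_one_iff {R : Type*} [CommRing R] {p : R[X]} {t : R}
    (hp : p ≠ 0) : p.rootMultiplicity t = 1 ↔ p.IsRoot t ∧ ¬ p.derivative.IsRoot t := by
  have hgt := one_lt_rootMultiplicity_iff_isRoot (t := t) hp
  rw [← rootMultiplicity_pos hp] at hgt ⊢
  by_cases hd : p.derivative.IsRoot t <;> simp only [hd, and_true, and_false, not_true,
    not_false_eq_true, iff_false] at hgt ⊢ <;> omega

theorem rootMultiplicity_eq_one_of_eval_add_mul {𝕜 : Type*} [NontriviallyNormedField 𝕜]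
    {p : 𝕜[X]} {g : 𝕜 → 𝕜} {a b c μ : 𝕜} (hc : c ≠ 0) (hpg : ∀ x, p.eval (a + b * x) = c * g x)
    (hg : g μ = 0) (hg' : deriv g μ ≠ 0) : p.rootMultiplicity (a + b * μ) = 1 := by
  have hderiv : HasDerivAt (fun x => p.eval (a + b * x)) (c * deriv g μ) μ := by
    simpa only [hpg] using ((differentiableAt_of_deriv_ne_zero hg').hasDerivAt.const_mul c)
  have hderiv' : HasDerivAt (fun x => p.eval (a + b * x))
      (p.derivative.eval (a + b * μ) * (b * 1)) μ :=
    (p.hasDerivAt _).comp μ (((hasDerivAt_id μ).const_mul b).const_add a)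
  have hp' : ¬ p.derivative.IsRoot (a + b * μ) := by
    intro h
    have := hderiv.unique hderiv'
    rw [h.eq_zero, zero_mul] at this
    exact mul_ne_zero hc hg' this
  rw [rootMultiplicity_eq_one_iff (fun hp => hp' (by simp [hp]))]
  exact ⟨by simp [IsRoot, hpg, hg], hp'⟩

end Polynomial

theorem exists_zero_near_of_deriv_ne_zero {𝕜 E : Type*} [RCLike 𝕜] [NormedAddCommGroup E]
    [NormedSpace 𝕜 E] [CompleteSpace E] {f : E → 𝕜 → 𝕜} (hf : ContDiff 𝕜 1 (Function.uncurry f))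
    {x₀ : E} {μ₀ : 𝕜} (h₀ : f x₀ μ₀ = 0) (h₀' : deriv (f x₀) μ₀ ≠ 0) :
    ∃ C > 0, ∀ᶠ x in 𝓝 x₀, ∃ μ, f x μ = 0 ∧ deriv (f x) μ ≠ 0 ∧ ‖μ - μ₀‖ ≤ C * ‖x - x₀‖ := by
  set F := Function.uncurry f
  have hpartial : ∀ x μ, deriv (f x) μ = fderiv 𝕜 F (x, μ) (0, 1) := fun x μ =>
    ((hf.differentiable one_ne_zero (x, μ)).hasFDerivAt.comp_hasDerivAt μ
      ((hasDerivAt_const μ x).prodMk (hasDerivAt_id μ))).deriv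
  have hF := hf.contDiffAt.hasStrictFDerivAt (x := (x₀, μ₀)) one_ne_zero
  have hinv : (fderiv 𝕜 F (x₀, μ₀) ∘L .inr 𝕜 E 𝕜).IsInvertible := by
    refine ⟨ContinuousLinearEquiv.unitsEquivAut 𝕜 (Units.mk0 _ h₀'), ?_⟩
    ext
    simp [hpartial]
  set ψ := hF.implicitFunctionOfProdDomain hinv
  have hψ₀ : ψ x₀ = μ₀ :=
    (hF.eventually_apply_eq_iff_implicitFunctionOfProdDomain hinv).self_of_nhds.1 rfl
  have hψ := hF.hasStrictFDerivAt_implicitFunctionOfProdDomain hinv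
  obtain ⟨C, hC, hCψ⟩ := hψ.hasFDerivAt.isBigO_sub.exists_pos
  have hderiv : ∀ᶠ x in 𝓝 x₀, deriv (f x) (ψ x) ≠ 0 := by
    simp only [hpartial]
    have : ContinuousAt (fun x => fderiv 𝕜 F (x, ψ x) (0, 1)) x₀ :=
      ((hf.continuous_fderiv one_ne_zero).continuousAt.comp
        (continuousAt_id.prodMk hψ.continuousAt)).clm_apply continuousAt_const
    exact this.eventually_ne (by simpa [hψ₀, hpartial] using h₀')
  refine ⟨C, hC, ?_⟩
  filter_upwards [hF.eventually_apply_implicitFunctionOfProdDomain hinv, hderiv, hCψ.bound]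
    with x hx hx' hxC
  exact ⟨ψ x, by simpa [F, h₀] using hx, hx', hψ₀ ▸ hxC⟩

namespace Matrix

section CommRing

variable {ι R : Type*} [Fintype ι] [DecidableEq ι] [CommRing R]

/-- When the rows of `lam • 1 - L₀` indexed by `s` vanish, this is `(lam + ε μ) • 1 - (L₀ + ε • L₁)`
with those rows divided by `ε`. -/
def scaledCharmatrix (L₀ L₁ : Matrix ι ι R) (s : Finset ι) (lam ε μ : R) : Matrix ι ι R :=
  of fun i j => if i ∈ s then (μ • 1 - L₁) i j else (lam • 1 - L₀) i j + ε * (μ • 1 - L₁) i j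

variable {L₀ L₁ : Matrix ι ι R} {s : Finset ι} {lam : R}

theorem diagonal_mul_scaledCharmatrix (hL₀ : L₀.IsDiag) (hs : ∀ i ∈ s, L₀ i i = lam) (ε μ : R) :
    diagonal (fun i => if i ∈ s then ε else 1) * scaledCharmatrix L₀ L₁ s lam ε μ
      = (lam + ε * μ) • 1 - (L₀ + ε • L₁) := by
  ext i j
  by_cases hi : i ∈ s
  · have hrow : L₀ i j = lam * (1 : Matrix ι ι R) i j := by
      rcases eq_or_ne i j with rfl | hij
      · simp [hs i hi]
      · simp [hL₀ hij, hij]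
    simp [scaledCharmatrix, hi, hrow]
    ring
  · simp [scaledCharmatrix, hi]
    ring

theorem eval_charpoly_add_smul (hL₀ : L₀.IsDiag) (hs : ∀ i ∈ s, L₀ i i = lam) (ε μ : R) :
    (L₀ + ε • L₁).charpoly.eval (lam + ε * μ)
      = ε ^ s.card * (scaledCharmatrix L₀ L₁ s lam ε μ).det := by
  rw [eval_charpoly, scalar_apply, ← smul_one_eq_diagonal,
    ← diagonal_mul_scaledCharmatrix hL₀ hs, det_mul, det_diagonal, Finset.prod_ite_mem,
    Finset.univ_inter, Finset.prod_const]

theorem det_scaledCharmatrix_zero {κ : Type*} [Fintype κ] [DecidableEq κ] (e : κ ↪ ι)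
    (hL₀ : L₀.IsDiag) (μ : R) :
    (scaledCharmatrix L₀ L₁ (Finset.univ.map e) lam 0 μ).det
      = (∏ i ∈ (Finset.univ.map e)ᶜ, (lam - L₀ i i)) * (L₁.submatrix e e).charpoly.eval μ := by
  set s := Finset.univ.map e
  set M := scaledCharmatrix L₀ L₁ s lam 0 μ
  have hblock : ∀ i, i ∉ s → ∀ j, j ∈ s → M i j = 0 := by
    intro i hi j hj
    have hij : i ≠ j := by rintro rfl; exact hi hj
    simp [M, scaledCharmatrix, hi, hL₀ hij, hij]
  let eS : κ ≃ {i // i ∈ s} := (Equiv.ofInjective e e.injective).trans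
    (Equiv.subtypeEquivRight fun i => by simp [s, eq_comm])
  rw [twoBlockTriangular_det M (· ∈ s) hblock, mul_comm, eval_charpoly, scalar_apply]
  congr 1
  · have hdiag : toSquareBlockProp M (· ∉ s) = diagonal fun i : {i // i ∉ s} => lam - L₀ i i := by
      ext i j
      rcases eq_or_ne i j with rfl | hij
      · simp [toSquareBlockProp, toBlock, M, scaledCharmatrix, i.2]
      · have hij' : (i : ι) ≠ j := Subtype.coe_ne_coe.2 hij
        simp [toSquareBlockProp, toBlock, M, scaledCharmatrix, i.2, hij, hij', hL₀ hij']
    rw [hdiag, det_diagonal, Finset.prod_subtype sᶜ (fun _ => Finset.mem_compl)]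
  · convert (det_submatrix_equiv_self eS (toSquareBlockProp M (· ∈ s))).symm using 2
    ext a b
    simp [toSquareBlockProp, toBlock, M, scaledCharmatrix, eS, s, diagonal_apply, one_apply]

end CommRing

section NormedField

variable {ι 𝕜 : Type*} [Fintype ι] [DecidableEq ι] [NontriviallyNormedField 𝕜]

theorem contDiff_det {E : Type*} [NormedAddCommGroup E] [NormedSpace 𝕜 E] {n : WithTop ℕ∞}
    {A : E → Matrix ι ι 𝕜} (hA : ∀ i j, ContDiff 𝕜 n fun x => A x i j) : ContDiff 𝕜 n fun x => (A x).det := by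
  simp only [det_apply]
  exact ContDiff.sum fun σ _ => (contDiff_prod fun i _ => hA (σ i) i).const_smul _

theorem contDiff_det_scaledCharmatrix (L₀ L₁ : Matrix ι ι 𝕜) (s : Finset ι) (lam : 𝕜)
    {n : WithTop ℕ∞} :
    ContDiff 𝕜 n fun p : 𝕜 × 𝕜 => (scaledCharmatrix L₀ L₁ s lam p.1 p.2).det :=
  contDiff_det fun i j => by
    by_cases hi : i ∈ s <;>
      simp only [scaledCharmatrix, of_apply, hi, if_true, if_false, sub_apply, smul_apply,
        smul_eq_mul] <;> fun_prop

theorem det_scaledCharmatrix_zero_eq_zero_and_deriv_ne_zero {κ : Type*}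
    [Fintype κ] [DecidableEq κ] {L₀ L₁ : Matrix ι ι 𝕜} {lam μ : 𝕜} (e : κ ↪ ι) (hL₀ : L₀.IsDiag)
    (hc : ∏ i ∈ (Finset.univ.map e)ᶜ, (lam - L₀ i i) ≠ 0)
    (hμ : (L₁.submatrix e e).charpoly.rootMultiplicity μ = 1) :
    (scaledCharmatrix L₀ L₁ (Finset.univ.map e) lam 0 μ).det = 0 ∧
      deriv (fun μ => (scaledCharmatrix L₀ L₁ (Finset.univ.map e) lam 0 μ).det) μ ≠ 0 := by
  obtain ⟨hroot, hroot'⟩ :=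
    (rootMultiplicity_eq_one_iff (charpoly_monic _).ne_zero).1 hμ
  simp only [det_scaledCharmatrix_zero e hL₀, deriv_const_mul_field', Polynomial.deriv]
  exact ⟨by simp [hroot.eq_zero], mul_ne_zero hc hroot'⟩

end NormedField

end Matrix

theorem perturbation_of_multiple_eigenvalue_general {m k : ℕ}
    (L0 L1 : Matrix (Fin m) (Fin m) ℂ) (hdiag : L0.IsDiag) (lam1 : ℂ)
    (e : Fin k ↪ Fin m)
    (hS : ∀ j : Fin m, L0 j j = lam1 ↔ ∃ i : Fin k, e i = j)
    (lamt : Fin k → ℂ) (hinj : Function.Injective lamt)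
    (hroots : (L1.submatrix e e).charpoly.roots = Multiset.map lamt Finset.univ.val) :
    ∃ C > (0 : ℝ), ∃ ε₀ > (0 : ℝ), ∀ ε : ℂ,
      0 < ‖ε‖ → ‖ε‖ < ε₀ → ∀ j : Fin k, ∃ ν : ℂ,
        (L0 + ε • L1).charpoly.rootMultiplicity ν = 1
        ∧ ‖ν - lam1 - ε * lamt j‖ ≤ C * (‖ε‖) ^ 2 := by
  set s := Finset.univ.map e
  have hs : ∀ i ∈ s, L0 i i = lam1 := by simp [s, hS]
  have hc : ∏ i ∈ sᶜ, (lam1 - L0 i i) ≠ 0 :=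
    Finset.prod_ne_zero_iff.2 fun i hi => sub_ne_zero.2 fun h =>
      Finset.mem_compl.1 hi (by simpa [s] using (hS i).1 h.symm)
  have hsimple (j : Fin k) : (L1.submatrix e e).charpoly.rootMultiplicity (lamt j) = 1 := by
    rw [← count_roots, hroots, Multiset.count_map_eq_count' _ _ hinj, Multiset.count_univ]
  have hzero (j : Fin k) :=
    det_scaledCharmatrix_zero_eq_zero_and_deriv_ne_zero e hdiag hc (hsimple j)
  have hnear (j : Fin k) := exists_zero_near_of_deriv_ne_zero
    (f := fun ε μ => (scaledCharmatrix L0 L1 s lam1 ε μ).det)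
    (contDiff_det_scaledCharmatrix L0 L1 s lam1) (hzero j).1 (hzero j).2
  choose C hC hev using hnear
  obtain ⟨ε₀, hε₀, hball⟩ := Metric.eventually_nhds_iff.1 (eventually_all.2 hev)
  have hCsum : 0 ≤ ∑ j, C j := Finset.sum_nonneg fun j _ => (hC j).le
  refine ⟨1 + ∑ j, C j, by linarith, ε₀, hε₀, fun ε hε hεε₀ j => ?_⟩
  obtain ⟨μ, hμ, hμ', hμC⟩ := hball (by simpa using hεε₀) j
  refine ⟨lam1 + ε * μ, rootMultiplicity_eq_one_of_eval_add_mul (pow_ne_zero s.card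
    (norm_pos_iff.1 hε)) (eval_charpoly_add_smul hdiag hs ε) hμ hμ', ?_⟩
  have hCj : C j ≤ 1 + ∑ j, C j := by
    linarith [Finset.single_le_sum (fun j _ => (hC j).le) (Finset.mem_univ j)]
  calc ‖lam1 + ε * μ - lam1 - ε * lamt j‖ = ‖ε‖ * ‖μ - lamt j‖ := by
        rw [← norm_mul]; ring_nf
    _ ≤ ‖ε‖ * (C j * ‖ε‖) := by gcongr; simpa using hμC
    _ ≤ (1 + ∑ j, C j) * ‖ε‖ ^ 2 := by nlinarith [norm_nonneg ε]

/-- matrix perturbation lemma: let `L₀` be a diagonal `m×m` complex matrix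
whose diagonal entry `λ₁` occurs exactly at the `k` indices enumerated by the embedding
`e : Fin k ↪ Fin m`, let `L₁` be any `m×m` complex matrix, and let `A₁` be the `k×k`
submatrix of `L₁` with rows and columns indexed by `e`.  If the eigenvalues
`λ̃₁, …, λ̃_k` of `A₁` (the roots of its characteristic polynomial) are pairwise distinct,
then there are `C > 0` and `ε₀ > 0` such that for every `ε` with `0 < |ε| < ε₀` and every
`j`, the matrix `L₀ + ε L₁` has a simple eigenvalue `ν_j(ε)` with
`|ν_j(ε) − λ₁ − ε λ̃_j| ≤ C |ε|²`. -/
theorem perturbation_of_multiple_eigenvalue {m k : ℕ} (hm : 1 ≤ m)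
    (L0 L1 : Matrix (Fin m) (Fin m) ℂ) (hdiag : L0.IsDiag) (lam1 : ℂ)
    (e : Fin k ↪ Fin m)
    (hS : ∀ j : Fin m, L0 j j = lam1 ↔ ∃ i : Fin k, e i = j)
    (lamt : Fin k → ℂ) (hinj : Function.Injective lamt)
    (hroots : (L1.submatrix e e).charpoly.roots = Multiset.map lamt Finset.univ.val) :
    ∃ C > (0 : ℝ), ∃ ε₀ > (0 : ℝ), ∀ ε : ℂ,
      0 < ‖ε‖ → ‖ε‖ < ε₀ → ∀ j : Fin k, ∃ ν : ℂ,
        (L0 + ε • L1).charpoly.rootMultiplicity ν = 1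
        ∧ ‖ν - lam1 - ε * lamt j‖ ≤ C * (‖ε‖) ^ 2 :=
  perturbation_of_multiple_eigenvalue_general L0 L1 hdiag lam1 e hS lamt hinj hroots
end

section
/- Let Ω ⊆ ℂ be open and let μ : Ω → ℂ be differentiable on Ω with μ(z)² = z² + 1 and μ(z) ≠ 0 for all z ∈ Ω. Fix λ_n, μ_n ∈ ℂ with μ_n² = λ_n² + 1, and define g(z) = (μ(z) μ_n − z λ_n − 1)/(z − λ_n). Then for every λ ∈ Ω with λ ≠ λ_n, g is differentiable at λ with g'(λ) = (μ_n / (μ(λ)(λ − λ_n))) · g(λ); in other words, the logarithmic derivative of g equals μ_n/(μ(λ)(λ − λ_n)), so (1/μ_n) log g is a local antiderivative of 1/(μ(λ)(λ − λ_n)). -/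
/-!
Write `μ' = dμ/dλ`. Differentiating `μ² = λ² + 1` gives `μ μ' = λ`, which also forces `μ ≠ 0`
(otherwise `λ = 0` and `0 = 1`). The quotient rule then turns the claim into a polynomial identity
in `λ, μ, μ', λ_n, μ_n`, which holds modulo `μ² = λ² + 1`, `μ_n² = λ_n² + 1` and `μ μ' = λ`.
-/

theorem HasDerivAt.two_mul_mul_eq_of_sq_eventuallyEq {𝕜 : Type*} [NontriviallyNormedField 𝕜]
    {f g : 𝕜 → 𝕜} {f' g' x : 𝕜} (hf : HasDerivAt f f' x) (hg : HasDerivAt g g' x)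
    (hfg : (fun z => f z ^ 2) =ᶠ[nhds x] g) : 2 * f x * f' = g' := by
  have hsq : HasDerivAt (fun z => f z ^ 2) (2 * f x * f') x := by
    simpa [pow_one, mul_comm, mul_left_comm, mul_assoc] using hf.fun_pow 2
  exact hsq.unique (hg.congr_of_eventuallyEq hfg)

theorem mul_deriv_eq_of_sq_eq_sq_add_one {μ : ℂ → ℂ} {μ' : ℂ} {Ω : Set ℂ} (hΩ : IsOpen Ω)
    (hsq : ∀ z ∈ Ω, μ z ^ 2 = z ^ 2 + 1) {lam : ℂ} (hlam : lam ∈ Ω) (hμ : HasDerivAt μ μ' lam) :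
    μ lam * μ' = lam := by
  have hcurve : HasDerivAt (fun z : ℂ => z ^ 2 + 1) (2 * lam) lam := by
    simpa using (hasDerivAt_pow 2 lam).add_const 1
  have h := hμ.two_mul_mul_eq_of_sq_eventuallyEq hcurve
    (Filter.eventually_of_mem (hΩ.mem_nhds hlam) hsq)
  linear_combination h / 2

-- The left side is literally the derivative produced by `HasDerivAt.fun_div`.
theorem abel_quotient_rule_identity {K : Type*} [Field K] {l m m' ln mn : K}
    (hm : m ^ 2 = l ^ 2 + 1) (hmn : mn ^ 2 = ln ^ 2 + 1) (hmm' : m * m' = l) (hl : l ≠ ln) :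
    ((m' * mn - 1 * ln) * (l - ln) - (m * mn - l * ln - 1) * 1) / (l - ln) ^ 2
      = mn / (m * (l - ln)) * ((m * mn - l * ln - 1) / (l - ln)) := by
  have hm0 : m ≠ 0 := by
    rintro rfl
    have hl0 : l = 0 := by simpa using hmm'.symm
    simp [hl0] at hm
  have hl' : l - ln ≠ 0 := sub_ne_zero.mpr hl
  field_simp
  linear_combination (l - ln) * mn * hmm' - mn * hm - m * hmn

theorem abel_antiderivative_general (Ω : Set ℂ) (hΩ : IsOpen Ω) (μ : ℂ → ℂ)
    (hμ : DifferentiableOn ℂ μ Ω)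
    (hsq : ∀ z ∈ Ω, μ z ^ 2 = z ^ 2 + 1)
    (lamn mun : ℂ) (hmun : mun ^ 2 = lamn ^ 2 + 1) :
    ∀ lam ∈ Ω, lam ≠ lamn →
      HasDerivAt (fun z : ℂ => (μ z * mun - z * lamn - 1) / (z - lamn))
        ((mun / (μ lam * (lam - lamn)))
          * ((μ lam * mun - lam * lamn - 1) / (lam - lamn))) lam := by
  intro lam hlam hlamn
  have hμ' : HasDerivAt μ (deriv μ lam) lam :=
    (hμ.differentiableAt (hΩ.mem_nhds hlam)).hasDerivAt
  have hnum : HasDerivAt (fun z : ℂ => μ z * mun - z * lamn - 1)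
      (deriv μ lam * mun - 1 * lamn) lam :=
    ((hμ'.mul_const mun).sub ((hasDerivAt_id lam).mul_const lamn)).sub_const 1
  have hden : HasDerivAt (fun z : ℂ => z - lamn) 1 lam := (hasDerivAt_id lam).sub_const lamn
  refine (hnum.fun_div hden (sub_ne_zero.mpr hlamn)).congr_deriv ?_
  exact abel_quotient_rule_identity (hsq lam hlam) hmun
    (mul_deriv_eq_of_sq_eq_sq_add_one hΩ hsq hlam hμ') hlamn

/-- let `Ω ⊆ ℂ` be open, `μ : Ω → ℂ` differentiable with `μ(z)² = z² + 1`
and `μ(z) ≠ 0` on `Ω`, and fix `λ_n, μ_n` with `μ_n² = λ_n² + 1`.  Then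
`g(z) = (μ(z)μ_n − zλ_n − 1)/(z − λ_n)` is differentiable at every `λ ∈ Ω`, `λ ≠ λ_n`,
with `g'(λ) = (μ_n/(μ(λ)(λ − λ_n))) g(λ)`; i.e. the logarithmic derivative of `g` equals
`μ_n/(μ(λ)(λ − λ_n))`, so `(1/μ_n) log g` is a local antiderivative of
`1/(μ(λ)(λ − λ_n))`. -/
theorem abel_antiderivative (Ω : Set ℂ) (hΩ : IsOpen Ω) (μ : ℂ → ℂ)
    (hμ : DifferentiableOn ℂ μ Ω)
    (hsq : ∀ z ∈ Ω, μ z ^ 2 = z ^ 2 + 1) (hne : ∀ z ∈ Ω, μ z ≠ 0)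
    (lamn mun : ℂ) (hmun : mun ^ 2 = lamn ^ 2 + 1) :
    ∀ lam ∈ Ω, lam ≠ lamn →
      HasDerivAt (fun z : ℂ => (μ z * mun - z * lamn - 1) / (z - lamn))
        ((mun / (μ lam * (lam - lamn)))
          * ((μ lam * mun - lam * lamn - 1) / (lam - lamn))) lam :=
  abel_antiderivative_general Ω hΩ μ hμ hsq lamn mun hmun
end
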